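/- Let F be a tileable figure with equilibrium function eq and base vertex w₀, let h∈H_F, and let T be the tiling of F with h_T=h. Then h is a maximal element of (H_F,≤) if and only if for every forced component U of F there is a directed path in G_T from a vertex of U_∞ to a vertex of U; and h is a minimal element of (H_F,≤) if and only if for every forced component U there is a directed path in G_T from a vertex of U to a vertex of U_∞. -/

import Mathlib

/-!
Any two elements of `H_F` differ by a function that is constant on each forced component,
because every critical cycle is tight (all its steps equal `t`) for every element of `H_F`.
Relative to `h_T`, this difference can only decrease along arcs of `G_T`, where `h_T` already
takes the step `t`. So if every forced component is reachable in `G_T` from `U_∞`, where the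
difference vanishes, then no element of `H_F` lies above `h_T`. Conversely, the vertices not
reachable from `U_∞` form a set that no arc of `G_T` enters, and raising `h_T` by `4` on it
stays in `H_F`: maximality forces this set to be empty. Minimality is the mirror image,
lowering by `4` the vertices from which `U_∞` cannot be reached.
-/

open Classical

noncomputable section

abbrev Vtx : Type := ℤ × ℤ
abbrev GArc : Type := Vtx × Vtx

/-- `a` is an arc of the grid graph `Λ⁺`: its endpoints differ by a unit vector. -/
def IsArc (a : GArc) : Prop :=
  (a.2.1 - a.1.1).natAbs + (a.2.2 - a.1.2).natAbs = 1

/-- reversal of an arc -/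
def arev (a : GArc) : GArc := (a.2, a.1)

/-- `+1` if the cell with lower-left corner `c` is black, `-1` if it is white
(checkerboard coloring). -/
def colorSign (c : Vtx) : ℤ := if (c.1 + c.2) % 2 = 0 then 1 else -1

/-- spin of an arc: `+1` if a traveler along the arc has a white cell on its left,
`-1` otherwise. -/
def sp (a : GArc) : ℤ :=
  colorSign a.1 * ((a.2.2 - a.1.2) ^ 2 - (a.2.1 - a.1.1) ^ 2)

/-- the arcs of a path/cycle given by its list of vertices -/
def arcsOf (C : List Vtx) : List GArc := C.zip C.tail

/-- sum of a function `g` on arcs over all the arcs of `C` (with multiplicity) -/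
def sumOn (g : GArc → ℤ) (C : List Vtx) : ℤ := ((arcsOf C).map g).sum

/-- a (closed) cycle of the grid -/
def IsCycle (C : List Vtx) : Prop :=
  2 ≤ C.length ∧ C.head? = C.getLast? ∧ ∀ a ∈ arcsOf C, IsArc a

/-- an elementary cycle: no repeated vertex except the endpoints -/
def IsElemCycle (C : List Vtx) : Prop := IsCycle C ∧ C.dropLast.Nodup

/-- contribution of an arc to the winding number of a cycle around the center of
cell `c` (crossings of the horizontal ray going East from the center of `c`). -/
def windTerm (c : Vtx) (a : GArc) : ℤ :=
  if a.1.1 = a.2.1 ∧ c.1 < a.1.1 ∧ min a.1.2 a.2.2 = c.2 then a.2.2 - a.1.2 else 0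

/-- winding number of the cycle `C` around the center of the cell `c` -/
def wind (C : List Vtx) (c : Vtx) : ℤ := sumOn (windTerm c) C

/-- a cycle is clockwise when its winding number around any cell is nonpositive
(`-1` on enclosed cells, `0` elsewhere) -/
def IsClockwise (C : List Vtx) : Prop := ∀ c : Vtx, wind C c ≤ 0

/-- a cell is enclosed by `C` when the winding number of `C` around it is nonzero -/
def Encloses (C : List Vtx) (c : Vtx) : Prop := wind C c ≠ 0

/-- number of black cells minus number of white cells enclosed by a clockwise cycle -/
def Dis (C : List Vtx) : ℤ := -∑ᶠ c : Vtx, wind C c * colorSign c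

/-- 4-adjacency of cells (shared edge) -/
def adj4 (c c' : Vtx) : Prop := (c'.1 - c.1).natAbs + (c'.2 - c.2).natAbs = 1

/-- 8-adjacency of cells (shared vertex at least) -/
def adj8 (c c' : Vtx) : Prop := c ≠ c' ∧ (c'.1 - c.1).natAbs ≤ 1 ∧ (c'.2 - c.2).natAbs ≤ 1

/-- a figure: a nonempty, finite, 4-connected set of cells such that no vertex has
all its incident edges on the boundary (no diagonal pinch, so no vertex
duplication is needed). -/
def IsFigure (F : Finset Vtx) : Prop :=
  F.Nonempty ∧
  (∀ c ∈ F, ∀ c' ∈ F, Relation.ReflTransGen (fun x y => x ∈ F ∧ y ∈ F ∧ adj4 x y) c c') ∧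
  (∀ x y : ℤ,
    ¬((x - 1, y - 1) ∈ F ∧ (x, y) ∈ F ∧ (x, y - 1) ∉ F ∧ (x - 1, y) ∉ F) ∧
    ¬((x, y - 1) ∈ F ∧ (x - 1, y) ∈ F ∧ (x - 1, y - 1) ∉ F ∧ (x, y) ∉ F))

/-- one of the two cells adjacent to the edge `[a]` -/
def cellA (a : GArc) : Vtx :=
  if a.1.2 = a.2.2 then (min a.1.1 a.2.1, a.1.2) else (a.1.1, min a.1.2 a.2.2)

/-- the other cell adjacent to the edge `[a]` -/
def cellB (a : GArc) : Vtx :=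
  if a.1.2 = a.2.2 then (min a.1.1 a.2.1, a.1.2 - 1) else (a.1.1 - 1, min a.1.2 a.2.2)

/-- arcs of the graph `G_F`: the edge `[a]` is a side of a cell of `F` -/
def ArcF (F : Finset Vtx) (a : GArc) : Prop := IsArc a ∧ (cellA a ∈ F ∨ cellB a ∈ F)

/-- boundary arcs of `F`: exactly one of the two adjacent cells is in `F` -/
def BoundaryArcF (F : Finset Vtx) (a : GArc) : Prop :=
  IsArc a ∧ ¬(cellA a ∈ F ↔ cellB a ∈ F)

/-- interior arcs of `F`: both adjacent cells are in `F` -/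
def InteriorArcF (F : Finset Vtx) (a : GArc) : Prop :=
  IsArc a ∧ cellA a ∈ F ∧ cellB a ∈ F

/-- `v` is a corner of the cell with lower-left corner `c` -/
def isCorner (v c : Vtx) : Prop :=
  (v.1 = c.1 ∨ v.1 = c.1 + 1) ∧ (v.2 = c.2 ∨ v.2 = c.2 + 1)

/-- vertices of `G_F`: the corners of the cells of `F` -/
def VF (F : Finset Vtx) : Set Vtx := {v | ∃ c ∈ F, isCorner v c}

/-- a cycle of the graph `G_F` -/
def IsCycleF (F : Finset Vtx) (C : List Vtx) : Prop :=
  2 ≤ C.length ∧ C.head? = C.getLast? ∧ ∀ a ∈ arcsOf C, ArcF F a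

/-- an elementary cycle of the graph `G_F` -/
def IsElemCycleF (F : Finset Vtx) (C : List Vtx) : Prop :=
  IsCycleF F C ∧ C.dropLast.Nodup

/-- number of black cells of `F` minus number of white cells of `F` enclosed by
the clockwise cycle `C` -/
def DisF (F : Finset Vtx) (C : List Vtx) : ℤ := -∑ c ∈ F, wind C c * colorSign c

/-- `ef` is skew-symmetric on the arcs of `G_F` -/
def IsSkewOnF (F : Finset Vtx) (ef : GArc → ℤ) : Prop :=
  ∀ a, ArcF F a → ef (arev a) = -ef a

/-- an equilibrium function of the figure `F` -/
def IsEquilibrium (F : Finset Vtx) (ef : GArc → ℤ) : Prop :=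
  IsSkewOnF F ef ∧
  ∀ C, IsElemCycleF F C → IsClockwise C → sumOn sp C + sumOn ef C = 4 * DisF F C

/-- the four sides of the cell `c`, as canonically oriented arcs -/
def sides (c : Vtx) : List GArc :=
  [((c.1, c.2), (c.1 + 1, c.2)), ((c.1, c.2 + 1), (c.1 + 1, c.2 + 1)),
   ((c.1, c.2), (c.1, c.2 + 1)), ((c.1 + 1, c.2), (c.1 + 1, c.2 + 1))]

/-- a domino tiling of `F`, encoded by the symmetric set `D` of the arcs whose
underlying edges are the central axes of its dominoes: every central axis has
both of its adjacent cells in `F` (dominoes are included in `F`), and every cell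
of `F` is covered by exactly one domino (exactly one of its sides is a central
axis): no overlap and no gap. -/
def IsTiling (F : Finset Vtx) (D : Set GArc) : Prop :=
  (∀ a ∈ D, arev a ∈ D) ∧
  (∀ a ∈ D, IsArc a ∧ cellA a ∈ F ∧ cellB a ∈ F) ∧
  (∀ c ∈ F, ∃! a, a ∈ sides c ∧ a ∈ D)

/-- characteristic function of a tiling: `1` on central axes, `0` elsewhere -/
def chi (D : Set GArc) (a : GArc) : ℤ := if a ∈ D then 1 else 0

/-- the height difference function of a tiling -/
def gT (ef : GArc → ℤ) (D : Set GArc) (a : GArc) : ℤ :=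
  ef a - sp a + 2 * sp a * (1 - 2 * chi D a)

/-- the function `t`: `eq(a)-sp(a)+2` on interior arcs, `eq(a)+sp(a)` on boundary arcs -/
def tArc (F : Finset Vtx) (ef : GArc → ℤ) (a : GArc) : ℤ :=
  if cellA a ∈ F ∧ cellB a ∈ F then ef a - sp a + 2 else ef a + sp a

/-- the function `b`: `eq(a)-sp(a)-2` on interior arcs, `eq(a)+sp(a)` on boundary arcs -/
def bArc (F : Finset Vtx) (ef : GArc → ℤ) (a : GArc) : ℤ :=
  if cellA a ∈ F ∧ cellB a ∈ F then ef a - sp a - 2 else ef a + sp a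

/-- the 8-connected component of the cell `c` in the complement of `F` -/
def comp8 (F : Finset Vtx) (c : Vtx) : Set Vtx :=
  {c' | Relation.ReflTransGen (fun x y => x ∉ F ∧ y ∉ F ∧ adj8 x y) c c'}

/-- `c` belongs to a hole of `F` (a finite 8-connected component of the complement) -/
def IsHoleCell (F : Finset Vtx) (c : Vtx) : Prop := c ∉ F ∧ (comp8 F c).Finite

/-- `c` belongs to `H_∞`, the infinite 8-connected component of the complement -/
def IsHinfCell (F : Finset Vtx) (c : Vtx) : Prop := c ∉ F ∧ ¬(comp8 F c).Finite

/-- `w` is a vertex of `V_F` on the boundary of `H_∞` -/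
def OnOuterBoundary (F : Finset Vtx) (w : Vtx) : Prop :=
  w ∈ VF F ∧ ∃ c, IsHinfCell F c ∧ isCorner w c

/-- vertices on the boundary of `F` -/
def Vb (F : Finset Vtx) : Set Vtx :=
  {v | (∃ c ∈ F, isCorner v c) ∧ ∃ c, c ∉ F ∧ isCorner v c}

/-- `h` belongs to the class `H_F` of height functions -/
def InHF (F : Finset Vtx) (ef : GArc → ℤ) (w0 : Vtx) (h : Vtx → ℤ) : Prop :=
  h w0 = 0 ∧ ∀ a, ArcF F a →
    (h a.2 - h a.1 = bArc F ef a ∨ h a.2 - h a.1 = tArc F ef a)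

/-- `h` is the height function induced by the tiling `D` (based at `w0`) -/
def IsHeightOf (F : Finset Vtx) (ef : GArc → ℤ) (D : Set GArc) (w0 : Vtx)
    (h : Vtx → ℤ) : Prop :=
  h w0 = 0 ∧ ∀ a, ArcF F a → h a.2 - h a.1 = gT ef D a

/-- a critical cycle: an elementary cycle of `G_F` with `t(C) = 0` -/
def CriticalCycle (F : Finset Vtx) (ef : GArc → ℤ) (C : List Vtx) : Prop :=
  IsElemCycleF F C ∧ sumOn (tArc F ef) C = 0

/-- a strongly critical cycle: critical, and `sp(a) = 1` on all its interior arcs -/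
def StronglyCriticalCycle (F : Finset Vtx) (ef : GArc → ℤ) (C : List Vtx) : Prop :=
  CriticalCycle F ef C ∧ ∀ a ∈ arcsOf C, InteriorArcF F a → sp a = 1

/-- two vertices are critically equivalent when some critical cycle passes
through both -/
def critRel (F : Finset Vtx) (ef : GArc → ℤ) (v v' : Vtx) : Prop :=
  ∃ C, CriticalCycle F ef C ∧ v ∈ C ∧ v' ∈ C

/-- the forced component of the vertex `v` (class of the equivalence relation
generated by critical equivalence) -/
def fcomp (F : Finset Vtx) (ef : GArc → ℤ) (v : Vtx) : Set Vtx :=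
  {v' | v' ∈ VF F ∧ Relation.EqvGen (critRel F ef) v v'}

/-- `S` is a forced component of `F` -/
def IsForcedComponent (F : Finset Vtx) (ef : GArc → ℤ) (S : Set Vtx) : Prop :=
  ∃ v ∈ VF F, S = fcomp F ef v

/-- `a` is an arc of the graph `G_T` of the tiling `D` -/
def GTArc (F : Finset Vtx) (ef : GArc → ℤ) (D : Set GArc) (a : GArc) : Prop :=
  ArcF F a ∧ gT ef D a = tArc F ef a

/-- there is a directed path in `G_T` from `u` to `v` -/
def GTReach (F : Finset Vtx) (ef : GArc → ℤ) (D : Set GArc) (u v : Vtx) : Prop :=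
  Relation.ReflTransGen (fun x y => GTArc F ef D (x, y)) u v

/-- the result of an upward flip on the component `S`: add `4` on `S` -/
def flipUpAt (S : Set Vtx) (h : Vtx → ℤ) : Vtx → ℤ :=
  fun v => h v + S.indicator (fun _ => (4 : ℤ)) v

/-- the result of a downward flip on the component `S`: subtract `4` on `S` -/
def flipDownAt (S : Set Vtx) (h : Vtx → ℤ) : Vtx → ℤ :=
  fun v => h v - S.indicator (fun _ => (4 : ℤ)) v

/-- `|h(v_S) - h'(v_S)|` for a representative `v_S` of `S` -/
def compDiff (h h' : Vtx → ℤ) (S : Set Vtx) : ℤ :=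
  if hS : S.Nonempty then |h hS.some - h' hS.some| else 0

/-- the distance `Δ(h,h') = Σ_U |h(v_U) - h'(v_U)|` over forced components `U` -/
def Delta (F : Finset Vtx) (ef : GArc → ℤ) (h h' : Vtx → ℤ) : ℤ :=
  ∑ᶠ S ∈ {S : Set Vtx | IsForcedComponent F ef S}, compDiff h h' S

/-- a sequence of `n` allowed upward flips at forced components distinct from `U_∞` -/
def UpFlipSeq (F : Finset Vtx) (ef : GArc → ℤ) (w0 : Vtx) (f : ℕ → Vtx → ℤ)
    (n : ℕ) : Prop :=
  ∀ i < n, ∃ S, IsForcedComponent F ef S ∧ S ≠ fcomp F ef w0 ∧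
    InHF F ef w0 (f i) ∧ InHF F ef w0 (f (i + 1)) ∧ f (i + 1) = flipUpAt S (f i)

/-- a sequence of `n` allowed (upward or downward) flips, flipping at step `i`
the forced component `s i` (distinct from `U_∞`) -/
def FlipSeq (F : Finset Vtx) (ef : GArc → ℤ) (w0 : Vtx) (f : ℕ → Vtx → ℤ)
    (s : ℕ → Set Vtx) (n : ℕ) : Prop :=
  ∀ i < n, IsForcedComponent F ef (s i) ∧ s i ≠ fcomp F ef w0 ∧
    InHF F ef w0 (f i) ∧ InHF F ef w0 (f (i + 1)) ∧
    (f (i + 1) = flipUpAt (s i) (f i) ∨ f (i + 1) = flipDownAt (s i) (f i))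

/-- the four arcs of the two horizontal edges through `v` (central axes of the
pair of vertical dominoes covering the 2×2 square centered at `v`) -/
def hPairAxes (v : Vtx) : Set GArc :=
  {((v.1 - 1, v.2), v), (v, (v.1 - 1, v.2)), (v, (v.1 + 1, v.2)), ((v.1 + 1, v.2), v)}

/-- the four arcs of the two vertical edges through `v` (central axes of the
pair of horizontal dominoes covering the 2×2 square centered at `v`) -/
def vPairAxes (v : Vtx) : Set GArc :=
  {((v.1, v.2 - 1), v), (v, (v.1, v.2 - 1)), (v, (v.1, v.2 + 1)), ((v.1, v.2 + 1), v)}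

/-- a local flip: replace the pair of dominoes covering a 2×2 square by the
other pair covering the same square -/
def LocalFlip (D D' : Set GArc) : Prop :=
  ∃ v : Vtx, (hPairAxes v ⊆ D ∧ D' = (D \ hPairAxes v) ∪ vPairAxes v) ∨
             (vPairAxes v ⊆ D ∧ D' = (D \ vPairAxes v) ∪ hPairAxes v)

/-- a sequence of `n` local flips between tilings of `F` -/
def LocalFlipSeq (F : Finset Vtx) (g : ℕ → Set GArc) (n : ℕ) : Prop :=
  ∀ i < n, IsTiling F (g i) ∧ IsTiling F (g (i + 1)) ∧ LocalFlip (g i) (g (i + 1))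

/-- `h` is a maximal element of `(H_F, ≤)` -/
def MaximalInHF (F : Finset Vtx) (ef : GArc → ℤ) (w0 : Vtx) (h : Vtx → ℤ) : Prop :=
  InHF F ef w0 h ∧ ∀ h', InHF F ef w0 h' →
    (∀ v ∈ VF F, h v ≤ h' v) → ∀ v ∈ VF F, h' v = h v

/-- `h` is a minimal element of `(H_F, ≤)` -/
def MinimalInHF (F : Finset Vtx) (ef : GArc → ℤ) (w0 : Vtx) (h : Vtx → ℤ) : Prop :=
  InHF F ef w0 h ∧ ∀ h', InHF F ef w0 h' →
    (∀ v ∈ VF F, h' v ≤ h v) → ∀ v ∈ VF F, h' v = h v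

/-- an elementary cycle of `G_F` enclosing a single cell of `F` -/
def AroundSingleCell (F : Finset Vtx) (C : List Vtx) : Prop :=
  IsElemCycleF F C ∧ ∃ c ∈ F, ∀ c' : Vtx, wind C c' ≠ 0 ↔ c' = c

/-- a cycle of `G_F` following clockwise the boundary of a hole of `F`: it
winds `-1` around each cell of the hole and `0` around every other cell -/
def IsClockwiseHoleContour (F : Finset Vtx) (C : List Vtx) : Prop :=
  IsElemCycleF F C ∧ ∃ c₀, IsHoleCell F c₀ ∧
    (∀ c ∈ comp8 F c₀, wind C c = -1) ∧ (∀ c ∉ comp8 F c₀, wind C c = 0)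

end

section HeightFunctions

variable {F : Finset Vtx} {ef : GArc → ℤ} {D : Set GArc}

lemma arev_arev (a : GArc) : arev (arev a) = a := rfl

lemma IsArc.arev {a : GArc} (h : IsArc a) : IsArc (arev a) := by
  simp only [IsArc, _root_.arev] at *; omega

lemma colorSign_snd_of_isArc {a : GArc} (h : IsArc a) : colorSign a.2 = -colorSign a.1 := by
  obtain ⟨⟨x₁, y₁⟩, x₂, y₂⟩ := a
  simp only [IsArc] at h
  simp only [colorSign]
  split_ifs <;> omega

lemma sp_arev {a : GArc} (h : IsArc a) : sp (arev a) = -sp a := by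
  have hc := colorSign_snd_of_isArc h
  obtain ⟨⟨x₁, y₁⟩, x₂, y₂⟩ := a
  simp only [sp, arev] at *
  rw [hc]; ring

lemma sp_eq_one_or_neg_one {a : GArc} (h : IsArc a) : sp a = 1 ∨ sp a = -1 := by
  obtain ⟨⟨x₁, y₁⟩, x₂, y₂⟩ := a
  simp only [IsArc] at h
  have hunit : (x₂ - x₁ = 0 ∧ (y₂ - y₁ = 1 ∨ y₂ - y₁ = -1)) ∨
      ((x₂ - x₁ = 1 ∨ x₂ - x₁ = -1) ∧ y₂ - y₁ = 0) := by omega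
  simp only [sp, colorSign]
  rcases hunit with ⟨hx, hy | hy⟩ | ⟨hx | hx, hy⟩ <;> rw [hx, hy] <;> split_ifs <;> norm_num

lemma cellA_arev {a : GArc} (h : IsArc a) : cellA (arev a) = cellA a := by
  obtain ⟨⟨x₁, y₁⟩, x₂, y₂⟩ := a
  simp only [IsArc] at h
  simp only [cellA, arev]
  split_ifs with h₁
  · simp [min_comm, h₁]
  · have : x₂ = x₁ := by omega
    simp [min_comm, this, h₁, Ne.symm h₁]

lemma cellB_arev {a : GArc} (h : IsArc a) : cellB (arev a) = cellB a := by
  obtain ⟨⟨x₁, y₁⟩, x₂, y₂⟩ := a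
  simp only [IsArc] at h
  simp only [cellB, arev]
  split_ifs with h₁
  · simp [min_comm, h₁]
  · have : x₂ = x₁ := by omega
    simp [min_comm, this, h₁, Ne.symm h₁]

lemma ArcF.arev {a : GArc} (h : ArcF F a) : ArcF F (arev a) :=
  ⟨h.1.arev, by rw [cellA_arev h.1, cellB_arev h.1]; exact h.2⟩

lemma chi_arev (hsymm : ∀ a ∈ D, arev a ∈ D) (a : GArc) : chi D (arev a) = chi D a := by
  have hmem : arev a ∈ D ↔ a ∈ D := ⟨fun h => arev_arev a ▸ hsymm _ h, hsymm a⟩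
  simp only [chi, hmem]

lemma gT_arev (hsk : IsSkewOnF F ef) (hsymm : ∀ a ∈ D, arev a ∈ D) {a : GArc}
    (ha : ArcF F a) : gT ef D (arev a) = -gT ef D a := by
  simp only [gT, hsk a ha, sp_arev ha.1, chi_arev hsymm]; ring

lemma tArc_arev (hsk : IsSkewOnF F ef) {a : GArc} (ha : ArcF F a) :
    tArc F ef (arev a) = -bArc F ef a := by
  simp only [tArc, bArc, cellA_arev ha.1, cellB_arev ha.1, hsk a ha, sp_arev ha.1]
  split_ifs <;> ring

lemma bArc_le_tArc (F : Finset Vtx) (ef : GArc → ℤ) (a : GArc) :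
    bArc F ef a ≤ tArc F ef a := by
  unfold bArc tArc; split_ifs <;> omega

lemma gT_eq_tArc_or_eq_bArc (hD : IsTiling F D) {a : GArc} (ha : IsArc a) :
    gT ef D a = tArc F ef a ∨ (gT ef D a = bArc F ef a ∧ bArc F ef a = tArc F ef a - 4) := by
  by_cases hint : cellA a ∈ F ∧ cellB a ∈ F
  · simp only [gT, tArc, bArc, chi, if_pos hint]
    rcases sp_eq_one_or_neg_one ha with hs | hs <;> split_ifs <;> rw [hs] <;> omega
  · have hnD : a ∉ D := fun hD' => hint ⟨(hD.2.1 a hD').2.1, (hD.2.1 a hD').2.2⟩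
    left
    simp only [gT, tArc, chi, if_neg hint, if_neg hnD]
    ring

def HasAdmissibleSteps (F : Finset Vtx) (ef : GArc → ℤ) (h : Vtx → ℤ) : Prop :=
  ∀ a, ArcF F a → h a.2 - h a.1 = bArc F ef a ∨ h a.2 - h a.1 = tArc F ef a

lemma HasAdmissibleSteps.step_le_tArc {h : Vtx → ℤ} (hh : HasAdmissibleSteps F ef h)
    {a : GArc} (ha : ArcF F a) : h a.2 - h a.1 ≤ tArc F ef a := by
  rcases hh a ha with hb | ht
  · exact hb ▸ bArc_le_tArc F ef a
  · exact ht.le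

lemma hasAdmissibleSteps_of_steps_eq_gT (hD : IsTiling F D) {h : Vtx → ℤ}
    (hh : ∀ a, ArcF F a → h a.2 - h a.1 = gT ef D a) : HasAdmissibleSteps F ef h := by
  intro a ha
  rw [hh a ha]
  rcases gT_eq_tArc_or_eq_bArc (ef := ef) hD ha.1 with ht | ⟨hb, -⟩
  · exact Or.inr ht
  · exact Or.inl hb

lemma inHF_of_isHeightOf (hD : IsTiling F D) {w0 : Vtx} {h : Vtx → ℤ}
    (hh : IsHeightOf F ef D w0 h) : InHF F ef w0 h :=
  ⟨hh.1, hasAdmissibleSteps_of_steps_eq_gT hD hh.2⟩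

lemma sumOn_sub_cons (g : Vtx → ℤ) (v : Vtx) (C : List Vtx) :
    sumOn (fun a => g a.2 - g a.1) (v :: C) =
      g ((v :: C).getLast (List.cons_ne_nil v C)) - g v := by
  induction C generalizing v with
  | nil => simp [sumOn, arcsOf]
  | cons w C ih =>
    have harcs : arcsOf (v :: w :: C) = (v, w) :: arcsOf (w :: C) := rfl
    have hC := ih w
    simp only [sumOn, harcs, List.map_cons, List.sum_cons] at hC ⊢
    rw [hC, List.getLast_cons (List.cons_ne_nil w C)]
    ring

lemma sumOn_sub_eq_zero (g : Vtx → ℤ) {C : List Vtx} (hC : C.head? = C.getLast?) :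
    sumOn (fun a => g a.2 - g a.1) C = 0 := by
  cases C with
  | nil => simp [sumOn, arcsOf]
  | cons v C =>
    rw [List.head?_cons, List.getLast?_eq_some_getLast (List.cons_ne_nil v C),
      Option.some_inj] at hC
    rw [sumOn_sub_cons, ← hC, sub_self]

/-- Every step is at most `t`, and the steps around a closed cycle sum to `0 = t(C)`. -/
lemma HasAdmissibleSteps.step_eq_tArc_of_criticalCycle {h : Vtx → ℤ}
    (hh : HasAdmissibleSteps F ef h) {C : List Vtx} (hC : CriticalCycle F ef C)
    {a : GArc} (ha : a ∈ arcsOf C) : h a.2 - h a.1 = tArc F ef a := by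
  obtain ⟨⟨⟨-, hclosed, harcs⟩, -⟩, htC⟩ := hC
  by_contra hne
  have hlt : sumOn (fun a => h a.2 - h a.1) C < sumOn (tArc F ef) C :=
    List.sum_lt_sum _ _ (fun b hb => hh.step_le_tArc (harcs b hb))
      ⟨a, ha, lt_of_le_of_ne (hh.step_le_tArc (harcs a ha)) hne⟩
  rw [sumOn_sub_eq_zero h hclosed, htC] at hlt
  exact lt_irrefl 0 hlt

lemma isChain_of_forall_mem_arcsOf {R : Vtx → Vtx → Prop} :
    ∀ {C : List Vtx}, (∀ a ∈ arcsOf C, R a.1 a.2) → C.IsChain R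
  | [], _ => .nil
  | [v], _ => .singleton v
  | v :: w :: _, h =>
    .cons_cons (h (v, w) List.mem_cons_self)
      (isChain_of_forall_mem_arcsOf fun a ha => h a (List.mem_cons_of_mem _ ha))

lemma eq_of_mem_of_forall_mem_arcsOf (d : Vtx → ℤ) {C : List Vtx}
    (hd : ∀ a ∈ arcsOf C, d a.1 = d a.2) {x y : Vtx} (hx : x ∈ C) (hy : y ∈ C) :
    d x = d y := by
  have hchain : (C.map d).IsChain (· = ·) :=
    (List.isChain_map d).2 (isChain_of_forall_mem_arcsOf hd)
  cases C with
  | nil => simp at hx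
  | cons v C =>
    rw [List.map_cons, List.isChain_cons_eq_iff_eq_replicate] at hchain
    have hconst : ∀ z ∈ v :: C, d z = d v := by
      intro z hz
      rcases List.mem_cons.1 hz with rfl | hz
      · rfl
      · exact List.eq_of_mem_replicate (hchain ▸ List.mem_map_of_mem hz)
    rw [hconst x hx, hconst y hy]

lemma sub_eq_of_eqvGen_critRel {h h' : Vtx → ℤ} (hh : HasAdmissibleSteps F ef h)
    (hh' : HasAdmissibleSteps F ef h') {v v' : Vtx} (he : Relation.EqvGen (critRel F ef) v v') :
    h' v - h v = h' v' - h v' := by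
  induction he with
  | rel x y hxy =>
    obtain ⟨C, hC, hx, hy⟩ := hxy
    refine eq_of_mem_of_forall_mem_arcsOf (fun w => h' w - h w) (fun a ha => ?_) hx hy
    have e := hh.step_eq_tArc_of_criticalCycle hC ha
    have e' := hh'.step_eq_tArc_of_criticalCycle hC ha
    omega
  | refl => rfl
  | symm _ _ _ ih => exact ih.symm
  | trans _ _ _ _ _ ih₁ ih₂ => exact ih₁.trans ih₂

lemma sub_le_sub_of_gTReach {h h' : Vtx → ℤ}
    (hh : ∀ a, ArcF F a → h a.2 - h a.1 = gT ef D a) (hh' : HasAdmissibleSteps F ef h')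
    {u v : Vtx} (hr : GTReach F ef D u v) :
    h' v - h v ≤ h' u - h u := by
  induction hr with
  | refl => exact le_rfl
  | @tail x y _ hxy ih =>
    have hstep : h y - h x = tArc F ef (x, y) := (hh _ hxy.1).trans hxy.2
    have hstep' := hh'.step_le_tArc hxy.1
    simp only at hstep hstep'
    omega

/-- An arc along which `δ` jumps up by `4` is not in `G_T`, so there `h` steps by `t - 4 = b`;
symmetrically for a jump down. -/
lemma hasAdmissibleSteps_add (hD : IsTiling F D) (hsk : IsSkewOnF F ef) {h δ : Vtx → ℤ}
    (hh : ∀ a, ArcF F a → h a.2 - h a.1 = gT ef D a) (c : ℤ)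
    (hδ : ∀ v, δ v = c ∨ δ v = c + 4)
    (hanti : ∀ x y, GTArc F ef D (x, y) → δ y ≤ δ x) :
    HasAdmissibleSteps F ef (fun v => h v + δ v) := by
  rintro ⟨x, y⟩ ha
  have hstep := hh _ ha
  have hgT_rev := gT_arev hsk hD.1 ha
  have ht_rev := tArc_arev hsk ha
  simp only [arev] at hstep hgT_rev ht_rev ⊢
  rcases hδ x with hx | hx <;> rcases hδ y with hy | hy
  · rcases gT_eq_tArc_or_eq_bArc (ef := ef) hD ha.1 with h₁ | ⟨h₁, -⟩ <;> omega
  · have hnot : ¬GTArc F ef D (x, y) := fun hxy => by have := hanti x y hxy; omega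
    rcases gT_eq_tArc_or_eq_bArc (ef := ef) hD ha.1 with h₁ | ⟨h₁, h₂⟩
    · exact absurd ⟨ha, h₁⟩ hnot
    · omega
  · have hnot : ¬GTArc F ef D (y, x) := fun hyx => by have := hanti y x hyx; omega
    rcases gT_eq_tArc_or_eq_bArc (ef := ef) hD ha.arev.1 with h₁ | ⟨h₁, h₂⟩
    · exact absurd ⟨ha.arev, h₁⟩ hnot
    · simp only [arev] at h₁ h₂
      omega
  · rcases gT_eq_tArc_or_eq_bArc (ef := ef) hD ha.1 with h₁ | ⟨h₁, -⟩ <;> omega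

lemma inHF_flipUpAt (hD : IsTiling F D) (hsk : IsSkewOnF F ef) {w0 : Vtx} {h : Vtx → ℤ}
    (hh : IsHeightOf F ef D w0 h) {S : Set Vtx}
    (hS : ∀ x y, GTArc F ef D (x, y) → y ∈ S → x ∈ S) (hw0 : w0 ∉ S) :
    InHF F ef w0 (flipUpAt S h) := by
  refine ⟨by simp [flipUpAt, hw0, hh.1],
    hasAdmissibleSteps_add hD hsk hh.2 0 (fun v => ?_) ?_⟩
  · by_cases hv : v ∈ S <;> simp [hv]
  · intro x y hxy
    by_cases hy : y ∈ S
    · simp [hy, hS x y hxy hy]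
    · simp [hy, Set.indicator_nonneg]

lemma inHF_flipDownAt (hD : IsTiling F D) (hsk : IsSkewOnF F ef) {w0 : Vtx} {h : Vtx → ℤ}
    (hh : IsHeightOf F ef D w0 h) {S : Set Vtx}
    (hS : ∀ x y, GTArc F ef D (x, y) → x ∈ S → y ∈ S) (hw0 : w0 ∉ S) :
    InHF F ef w0 (flipDownAt S h) := by
  refine ⟨by simp [flipDownAt, hw0, hh.1], ?_⟩
  have := hasAdmissibleSteps_add hD hsk hh.2 (-4)
    (δ := fun v => -S.indicator (fun _ => 4) v)
    (fun v => by by_cases hv : v ∈ S <;> simp [hv]) (fun x y hxy => ?_)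
  · simpa only [HasAdmissibleSteps, flipDownAt, ← sub_eq_add_neg] using this
  · by_cases hx : x ∈ S
    · simp [hx, hS x y hxy hx]
    · simp [hx, Set.indicator_nonneg]

lemma mem_fcomp_self {v : Vtx} (hv : v ∈ VF F) : v ∈ fcomp F ef v :=
  ⟨hv, Relation.EqvGen.refl v⟩

lemma gTReach_of_maximalInHF (hD : IsTiling F D) (hsk : IsSkewOnF F ef) {w0 : Vtx}
    {h : Vtx → ℤ} (hh : IsHeightOf F ef D w0 h) (hw0 : w0 ∈ VF F)
    (hmax : MaximalInHF F ef w0 h) {v : Vtx} (hv : v ∈ VF F) :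
    ∃ u ∈ fcomp F ef w0, GTReach F ef D u v := by
  by_contra hunreach
  set S := {v | ¬∃ u ∈ fcomp F ef w0, GTReach F ef D u v}
  have hflip : InHF F ef w0 (flipUpAt S h) :=
    inHF_flipUpAt hD hsk hh (fun x y hxy hy ⟨u, hu, hr⟩ => hy ⟨u, hu, hr.tail hxy⟩)
      fun hw0S => hw0S ⟨w0, mem_fcomp_self hw0, .refl⟩
  have hle : ∀ v ∈ VF F, h v ≤ flipUpAt S h v := fun v _ =>
    le_add_of_nonneg_right (Set.indicator_nonneg (fun _ _ => by norm_num) v)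
  have := hmax.2 _ hflip hle v hv
  simp [flipUpAt, Set.indicator_of_mem (show v ∈ S from hunreach)] at this

lemma gTReach_of_minimalInHF (hD : IsTiling F D) (hsk : IsSkewOnF F ef) {w0 : Vtx}
    {h : Vtx → ℤ} (hh : IsHeightOf F ef D w0 h) (hw0 : w0 ∈ VF F)
    (hmin : MinimalInHF F ef w0 h) {v : Vtx} (hv : v ∈ VF F) :
    ∃ u ∈ fcomp F ef w0, GTReach F ef D v u := by
  by_contra hunreach
  set S := {v | ¬∃ u ∈ fcomp F ef w0, GTReach F ef D v u}
  have hflip : InHF F ef w0 (flipDownAt S h) :=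
    inHF_flipDownAt hD hsk hh (fun x y hxy hx ⟨u, hu, hr⟩ => hx ⟨u, hu, hr.head hxy⟩)
      fun hw0S => hw0S ⟨w0, mem_fcomp_self hw0, .refl⟩
  have hle : ∀ v ∈ VF F, flipDownAt S h v ≤ h v := fun v _ =>
    sub_le_self _ (Set.indicator_nonneg (fun _ _ => by norm_num) v)
  have := hmin.2 _ hflip hle v hv
  simp [flipDownAt, Set.indicator_of_mem (show v ∈ S from hunreach)] at this

lemma maximalInHF_of_forall_gTReach (hD : IsTiling F D) {w0 : Vtx} {h : Vtx → ℤ}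
    (hh : IsHeightOf F ef D w0 h)
    (hreach : ∀ v ∈ VF F,
      ∃ u ∈ fcomp F ef w0, ∃ v' ∈ fcomp F ef v, GTReach F ef D u v') :
    MaximalInHF F ef w0 h := by
  have hHF := inHF_of_isHeightOf hD hh
  refine ⟨hHF, fun h' hh' hle v hv => ?_⟩
  obtain ⟨u, hu, v', hv', hr⟩ := hreach v hv
  have hu0 := sub_eq_of_eqvGen_critRel hHF.2 hh'.2 hu.2
  have hvv' := sub_eq_of_eqvGen_critRel hHF.2 hh'.2 hv'.2
  have hpath := sub_le_sub_of_gTReach hh.2 hh'.2 hr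
  have := hle v' hv'.1
  rw [hHF.1, hh'.1] at hu0
  omega

lemma minimalInHF_of_forall_gTReach (hD : IsTiling F D) {w0 : Vtx} {h : Vtx → ℤ}
    (hh : IsHeightOf F ef D w0 h)
    (hreach : ∀ v ∈ VF F,
      ∃ u ∈ fcomp F ef v, ∃ v' ∈ fcomp F ef w0, GTReach F ef D u v') :
    MinimalInHF F ef w0 h := by
  have hHF := inHF_of_isHeightOf hD hh
  refine ⟨hHF, fun h' hh' hle v hv => ?_⟩
  obtain ⟨u, hu, v', hv', hr⟩ := hreach v hv
  have hvu := sub_eq_of_eqvGen_critRel hHF.2 hh'.2 hu.2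
  have hv0 := sub_eq_of_eqvGen_critRel hHF.2 hh'.2 hv'.2
  have hpath := sub_le_sub_of_gTReach hh.2 hh'.2 hr
  have := hle u hu.1
  rw [hHF.1, hh'.1] at hv0
  omega

end HeightFunctions

theorem maximal_minimal_iff_reachability_general (F : Finset Vtx)
    (ef : GArc → ℤ) (hef : IsEquilibrium F ef)
    (w0 : Vtx) (hw0 : OnOuterBoundary F w0)
    (D : Set GArc) (hD : IsTiling F D)
    (h : Vtx → ℤ) (hh : IsHeightOf F ef D w0 h) :
    (MaximalInHF F ef w0 h ↔
      ∀ S : Set Vtx, IsForcedComponent F ef S →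
        ∃ u v : Vtx, u ∈ fcomp F ef w0 ∧ v ∈ S ∧ GTReach F ef D u v) ∧
    (MinimalInHF F ef w0 h ↔
      ∀ S : Set Vtx, IsForcedComponent F ef S →
        ∃ u v : Vtx, u ∈ S ∧ v ∈ fcomp F ef w0 ∧ GTReach F ef D u v) := by
  refine ⟨⟨fun hmax => ?_, fun hreach => ?_⟩, ⟨fun hmin => ?_, fun hreach => ?_⟩⟩
  · rintro S ⟨v, hv, rfl⟩
    obtain ⟨u, hu, hr⟩ := gTReach_of_maximalInHF hD hef.1 hh hw0.1 hmax hv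
    exact ⟨u, v, hu, mem_fcomp_self hv, hr⟩
  · refine maximalInHF_of_forall_gTReach hD hh fun v hv => ?_
    obtain ⟨u, v', hu, hv', hr⟩ := hreach _ ⟨v, hv, rfl⟩
    exact ⟨u, hu, v', hv', hr⟩
  · rintro S ⟨v, hv, rfl⟩
    obtain ⟨u, hu, hr⟩ := gTReach_of_minimalInHF hD hef.1 hh hw0.1 hmin hv
    exact ⟨v, u, mem_fcomp_self hv, hu, hr⟩
  · refine minimalInHF_of_forall_gTReach hD hh fun v hv => ?_
    obtain ⟨u, v', hu, hv', hr⟩ := hreach _ ⟨v, hv, rfl⟩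
    exact ⟨u, hu, v', hv', hr⟩

/-- `h_T` is maximal in `(H_F, ≤)` iff every forced component is
reachable in `G_T` from `U_∞`, and minimal iff `U_∞` is reachable in `G_T` from
every forced component. -/
theorem maximal_minimal_iff_reachability (F : Finset Vtx) (hF : IsFigure F)
    (ef : GArc → ℤ) (hef : IsEquilibrium F ef)
    (w0 : Vtx) (hw0 : OnOuterBoundary F w0)
    (D : Set GArc) (hD : IsTiling F D)
    (h : Vtx → ℤ) (hh : IsHeightOf F ef D w0 h) :
    (MaximalInHF F ef w0 h ↔
      ∀ S : Set Vtx, IsForcedComponent F ef S →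
        ∃ u v : Vtx, u ∈ fcomp F ef w0 ∧ v ∈ S ∧ GTReach F ef D u v) ∧
    (MinimalInHF F ef w0 h ↔
      ∀ S : Set Vtx, IsForcedComponent F ef S →
        ∃ u v : Vtx, u ∈ S ∧ v ∈ fcomp F ef w0 ∧ GTReach F ef D u v) :=
  maximal_minimal_iff_reachability_general F ef hef w0 hw0 D hD h hh
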